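/- arXiv:2007.14925 — 4 statements merged into one kernel-verified Lean document; each statement's English description precedes it below -/
import Mathlib

section
/- Representation formula: let f : Ω_D → ℍ be a slice function and let y = (α₁+I₁β₁,…,αₙ+Iₙβₙ) ∈ Ω_D with α_h,β_h ∈ ℝ and I_h ∈ 𝕊. Then for every x = (α₁+J₁β₁,…,αₙ+Jₙβₙ) ∈ Ω_D with the same α_h,β_h and arbitrary J_h ∈ 𝕊, one has f(x) = 2^{−n} ∑_{K,H∈𝒫(n)} (−1)^{|K∩H|} J_K ((I_K)^{−1} f(y^{c,H})). Moreover, if F = (F_K)_K is a stem function inducing f, then F_K(z) = 2^{−n} ∑_{H∈𝒫(n)} (−1)^{|K∩H|} (I_K)^{−1} f(y^{c,H}) for every K ∈ 𝒫(n), where z = (α₁+iβ₁,…,αₙ+iβₙ) ∈ D; in particular every slice function is induced by a unique stem function. -/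
noncomputable section

abbrev ℍ := Quaternion ℝ

/-- The sphere of quaternionic imaginary units. -/
def Sph : Set ℍ := {J | J ^ 2 = -1}

/-- The complex slice `ℂ_J = {a + b J : a b : ℝ}`. -/
def CJ (J : ℍ) : Set ℍ := {x | ∃ a b : ℝ, x = (a : ℍ) + (b : ℍ) * J}

variable {n : ℕ}

/-- Conjugation of the `h`-th complex coordinate. -/
def conjCoord (h : Fin n) (z : Fin n → ℂ) : Fin n → ℂ :=
  Function.update z h (starRingEnd ℂ (z h))

/-- Quaternionic conjugation of the coordinates with index in `H`. -/
def conjQ (H : Finset (Fin n)) (x : Fin n → ℍ) : Fin n → ℍ :=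
  fun h => if h ∈ H then star (x h) else x h

/-- Ordered product `J_K` of the values of `J` over `K`, in increasing index order. -/
def JK (J : Fin n → ℍ) (K : Finset (Fin n)) : ℍ :=
  ((K.sort (· ≤ ·)).map J).prod

/-- The complex point with coordinates `α h + i β h`. -/
def zOf (α β : Fin n → ℝ) : Fin n → ℂ :=
  fun h => (α h : ℂ) + (β h : ℂ) * Complex.I

/-- The quaternionic point with coordinates `α h + β h * J h`. -/
def ptOf (α β : Fin n → ℝ) (J : Fin n → ℍ) : Fin n → ℍ :=
  fun h => (α h : ℍ) + (β h : ℍ) * J h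

/-- The circularization `Ω_D` of `D ⊆ ℂⁿ` in `ℍⁿ`. -/
def OmegaD (D : Set (Fin n → ℂ)) : Set (Fin n → ℍ) :=
  {x | ∃ α β : Fin n → ℝ, ∃ J : Fin n → ℍ,
    (∀ h, J h ∈ Sph) ∧ x = ptOf α β J ∧ zOf α β ∈ D}

/-- Invariance of `D` under all coordinatewise complex conjugations. -/
def ConjInv (D : Set (Fin n → ℂ)) : Prop :=
  ∀ h : Fin n, ∀ z ∈ D, conjCoord h z ∈ D

/-- Stem function condition for a family `F = (F_K)`. -/
def IsStem (D : Set (Fin n → ℂ)) (F : Finset (Fin n) → (Fin n → ℂ) → ℍ) : Prop :=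
  ∀ (K : Finset (Fin n)) (h : Fin n), ∀ z ∈ D,
    F K (conjCoord h z) = (if h ∈ K then -1 else 1) * F K z

/-- `f` is the slice function induced by the stem function `F` on `Ω_D`. -/
def Induces (D : Set (Fin n → ℂ)) (F : Finset (Fin n) → (Fin n → ℂ) → ℍ)
    (f : (Fin n → ℍ) → ℍ) : Prop :=
  ∀ (α β : Fin n → ℝ) (J : Fin n → ℍ), (∀ h, J h ∈ Sph) → zOf α β ∈ D →
    f (ptOf α β J) = ∑ K : Finset (Fin n), JK J K * F K (zOf α β)

/-- `f` is a slice function on `Ω_D`. -/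
def IsSlice (D : Set (Fin n → ℂ)) (f : (Fin n → ℍ) → ℍ) : Prop :=
  ∃ F, IsStem D F ∧ Induces D F f

/-- Each component of the stem function is of class `C¹` on `D`. -/
def StemC1 (D : Set (Fin n → ℂ)) (F : Finset (Fin n) → (Fin n → ℂ) → ℍ) : Prop :=
  ∀ K, ContDiffOn ℝ 1 (F K) D

/-- Holomorphy (Cauchy–Riemann system) of a stem function. -/
def StemHolo (D : Set (Fin n → ℂ)) (F : Finset (Fin n) → (Fin n → ℂ) → ℍ) : Prop :=
  ∀ z ∈ D, ∀ h : Fin n, ∀ K : Finset (Fin n), h ∉ K →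
    fderiv ℝ (F K) z (Pi.single h 1) =
      fderiv ℝ (F (insert h K)) z (Pi.single h Complex.I) ∧
    fderiv ℝ (F K) z (Pi.single h Complex.I) =
      -fderiv ℝ (F (insert h K)) z (Pi.single h 1)

/-- `f` is a slice regular function on `Ω_D`. -/
def IsSliceRegular (D : Set (Fin n → ℂ)) (f : (Fin n → ℍ) → ℍ) : Prop :=
  ∃ F, IsStem D F ∧ StemC1 D F ∧ StemHolo D F ∧ Induces D F f

/-- Pointwise product of stem functions associated with `σ`. -/
def SP (σ : Finset (Fin n) → Finset (Fin n) → ℝ)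
    (F G : Finset (Fin n) → (Fin n → ℂ) → ℍ) :
    Finset (Fin n) → (Fin n → ℂ) → ℍ :=
  fun K z => ∑ H : Finset (Fin n), ∑ L : Finset (Fin n),
    if symmDiff H L = K then σ H L • (F H z * G L z) else 0

/-- The tensor-product sign function `σ_⊗(K,H) = (-1)^{|K∩H|}`. -/
def sigmaT : Finset (Fin n) → Finset (Fin n) → ℝ :=
  fun K H => (-1 : ℝ) ^ (K ∩ H).card

/-- The tensor (slice) product of stem functions. -/
def SPT (F G : Finset (Fin n) → (Fin n → ℂ) → ℍ) :
    Finset (Fin n) → (Fin n → ℂ) → ℍ := SP sigmaT F G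

/-- The stem function `∂_h F`. -/
def Dplus (F : Finset (Fin n) → (Fin n → ℂ) → ℍ) (h : Fin n) :
    Finset (Fin n) → (Fin n → ℂ) → ℍ :=
  fun K z => (2 : ℝ)⁻¹ • (fderiv ℝ (F K) z (Pi.single h 1) +
    ((-1 : ℝ) ^ (K ∩ {h}).card) •
      fderiv ℝ (F (symmDiff K {h})) z (Pi.single h Complex.I))

/-- The stem function `∂̄_h F`. -/
def Dminus (F : Finset (Fin n) → (Fin n → ℂ) → ℍ) (h : Fin n) :
    Finset (Fin n) → (Fin n → ℂ) → ℍ :=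
  fun K z => (2 : ℝ)⁻¹ • (fderiv ℝ (F K) z (Pi.single h 1) -
    ((-1 : ℝ) ^ (K ∩ {h}).card) •
      fderiv ℝ (F (symmDiff K {h})) z (Pi.single h Complex.I))

/-- The ordered monomial function `x ↦ x^ℓ a = x₁^{ℓ₁} ⋯ xₙ^{ℓₙ} a`. -/
def mono (ℓ : Fin n → ℕ) (a : ℍ) (x : Fin n → ℍ) : ℍ :=
  (List.ofFn fun h => x h ^ ℓ h).prod * a

/-- The coordinatewise map `φ_J : ℂⁿ → (ℂ_J)ⁿ ⊆ ℍⁿ`. -/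
def phiJ (J : ℍ) (z : Fin n → ℂ) : Fin n → ℍ :=
  fun h => ((z h).re : ℍ) + ((z h).im : ℍ) * J

/-- The standard basis vector `e_K` of `ℝ^{𝒫(n)}`. -/
def eB (K : Finset (Fin n)) : Finset (Fin n) → ℝ := Pi.single K 1

/-- The `Δ`-product on `ℝ^{𝒫(n)}` associated with `σ`. -/
def deltaMulR (σ : Finset (Fin n) → Finset (Fin n) → ℝ)
    (v w : Finset (Fin n) → ℝ) : Finset (Fin n) → ℝ :=
  fun K => ∑ H : Finset (Fin n), ∑ L : Finset (Fin n),
    if symmDiff H L = K then σ H L * v H * w L else 0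

/-!
Conjugating the coordinates of `y` indexed by `H` flips the signs of the units `I_h`, `h ∈ H`, so
`f(y^{c,H}) = ∑_L (-1)^{|L ∩ H|} I_L F_L(z)`. The characters `H ↦ (-1)^{|K ∩ H|}` of the group
`(𝒫(n), Δ)` are orthogonal, hence `∑_H (-1)^{|K ∩ H|} I_K⁻¹ f(y^{c,H}) = 2^n F_K(z)`. Substituting
this into `f(x) = ∑_K J_K F_K(z)` gives the representation formula, and since its right-hand side
only involves `f`, the stem function is unique.
-/

open Finset

theorem neg_one_pow_card_inter_eq_prod {α R : Type*} [DecidableEq α] [CommRing R]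
    (K H : Finset α) :
    (-1 : R) ^ #(K ∩ H) = ∏ i ∈ H, if i ∈ K then -1 else 1 := by
  rw [prod_ite_mem, prod_const, inter_comm]

theorem sum_neg_one_pow_card_inter_mul {α R : Type*} [Fintype α] [DecidableEq α] [Ring R]
    (K L : Finset α) :
    ∑ H : Finset α, (-1 : R) ^ #(K ∩ H) * (-1) ^ #(L ∩ H) =
      if K = L then 2 ^ Fintype.card α else 0 := by
  suffices h : ∑ H : Finset α, (-1 : ℤ) ^ #(K ∩ H) * (-1) ^ #(L ∩ H) =
      if K = L then 2 ^ Fintype.card α else 0 by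
    split_ifs at h ⊢ <;> simpa using congrArg (Int.cast : ℤ → R) h
  simp only [neg_one_pow_card_inter_eq_prod, ← prod_mul_distrib]
  rw [← powerset_univ, ← prod_one_add]
  split_ifs with hKL
  · subst hKL
    rw [← card_univ, ← prod_const]
    refine prod_congr rfl fun i _ => ?_
    split_ifs <;> norm_num
  · obtain ⟨i, hi⟩ : ∃ i, ¬ (i ∈ K ↔ i ∈ L) := by
      by_contra! h
      exact hKL (Finset.ext h)
    refine prod_eq_zero (mem_univ i) ?_
    by_cases hK : i ∈ K <;> by_cases hL : i ∈ L <;> simp_all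

theorem List.prod_map_ite_neg {ι R : Type*} [Ring R] (p : ι → Prop) [DecidablePred p]
    (f : ι → R) (l : List ι) :
    (l.map fun i => if p i then -f i else f i).prod = (-1) ^ l.countP p * (l.map f).prod := by
  induction l with
  | nil => simp
  | cons a l ih =>
    simp only [List.map_cons, List.prod_cons, List.countP_cons, ih]
    by_cases ha : p a <;>
      simp [ha, pow_succ, ← mul_assoc, ((Commute.neg_one_left (f a)).pow_left _).eq]

theorem countP_sort_mem {α : Type*} [LinearOrder α] (K H : Finset α) :
    (K.sort (· ≤ ·)).countP (· ∈ H) = #(K ∩ H) := by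
  rw [← filter_mem_eq_inter, card_def, filter_val, ← Multiset.countP_eq_card_filter,
    ← Multiset.coe_countP, sort_eq]

instance : CharZero ℍ := charZero_of_injective_algebraMap (algebraMap ℝ ℍ).injective

variable {n : ℕ}

theorem re_eq_zero_of_mem_Sph {J : ℍ} (hJ : J ∈ Sph) : J.re = 0 := by
  have hsq : J * J = -1 := by simpa [Sph, sq] using hJ
  have hre := congrArg QuaternionAlgebra.re hsq
  have hi := congrArg QuaternionAlgebra.imI hsq
  have hj := congrArg QuaternionAlgebra.imJ hsq
  have hk := congrArg QuaternionAlgebra.imK hsq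
  simp only [Quaternion.re_mul, Quaternion.imI_mul, Quaternion.imJ_mul, Quaternion.imK_mul,
    Quaternion.re_neg, Quaternion.imI_neg, Quaternion.imJ_neg, Quaternion.imK_neg,
    Quaternion.re_one, Quaternion.imI_one, Quaternion.imJ_one, Quaternion.imK_one] at hre hi hj hk
  nlinarith [sq_nonneg J.re, sq_nonneg J.imI, sq_nonneg J.imJ, sq_nonneg J.imK]

theorem star_eq_neg_of_mem_Sph {J : ℍ} (hJ : J ∈ Sph) : star J = -J :=
  Quaternion.star_eq_neg.2 (re_eq_zero_of_mem_Sph hJ)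

theorem ne_zero_of_mem_Sph {J : ℍ} (hJ : J ∈ Sph) : J ≠ 0 := by
  rintro rfl
  simp [Sph] at hJ

theorem star_mem_Sph {J : ℍ} (hJ : J ∈ Sph) : star J ∈ Sph := by
  simp only [Sph, Set.mem_ofPred_eq] at hJ ⊢
  rw [← star_pow, hJ, star_neg, star_one]

theorem Sph_nonempty : Sph.Nonempty :=
  ⟨Quaternion.ofComplex Complex.I, by
    rw [Sph, Set.mem_ofPred_eq, ← map_pow, Complex.I_sq, map_neg, map_one]⟩

theorem conjQ_mem_Sph {I : Fin n → ℍ} (hI : ∀ h, I h ∈ Sph) (H : Finset (Fin n)) (h : Fin n) :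
    conjQ H I h ∈ Sph := by
  unfold conjQ
  split_ifs
  exacts [star_mem_Sph (hI h), hI h]

theorem conjQ_ptOf (α β : Fin n → ℝ) (I : Fin n → ℍ) (H : Finset (Fin n)) :
    conjQ H (ptOf α β I) = ptOf α β (conjQ H I) := by
  funext h
  simp only [conjQ, ptOf]
  split_ifs
  · simp [Quaternion.star_coe, Quaternion.coe_commutes]
  · rfl

theorem JK_conjQ {I : Fin n → ℍ} (hI : ∀ h, I h ∈ Sph) (H K : Finset (Fin n)) :
    JK (conjQ H I) K = (-1) ^ #(K ∩ H) * JK I K := by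
  have hconj : conjQ H I = fun h => if h ∈ H then -I h else I h := by
    funext h
    simp only [conjQ, star_eq_neg_of_mem_Sph (hI h)]
  rw [hconj, JK, JK, List.prod_map_ite_neg, countP_sort_mem]

theorem JK_ne_zero {I : Fin n → ℍ} (hI : ∀ h, I h ∈ Sph) (K : Finset (Fin n)) : JK I K ≠ 0 :=
  List.prod_ne_zero fun h0 => by
    obtain ⟨h, -, hh⟩ := List.mem_map.1 h0
    exact ne_zero_of_mem_Sph (hI h) hh

theorem zOf_re_im (z : Fin n → ℂ) : zOf (fun h => (z h).re) (fun h => (z h).im) = z := by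
  funext h
  simp [zOf, Complex.re_add_im]

namespace Induces

variable {D : Set (Fin n → ℂ)} {F : Finset (Fin n) → (Fin n → ℂ) → ℍ} {f : (Fin n → ℍ) → ℍ}
  {α β : Fin n → ℝ} {I : Fin n → ℍ}

theorem apply_conjQ_ptOf (hind : Induces D F f) (hI : ∀ h, I h ∈ Sph) (hz : zOf α β ∈ D)
    (H : Finset (Fin n)) :
    f (conjQ H (ptOf α β I)) = ∑ L, (-1) ^ #(L ∩ H) * (JK I L * F L (zOf α β)) := by
  rw [conjQ_ptOf, hind α β _ (conjQ_mem_Sph hI H) hz]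
  simp only [JK_conjQ hI, mul_assoc]

theorem stem_eq_sum (hind : Induces D F f) (hI : ∀ h, I h ∈ Sph) (hz : zOf α β ∈ D)
    (K : Finset (Fin n)) :
    F K (zOf α β) = ((2 : ℍ) ^ n)⁻¹ * ∑ H : Finset (Fin n),
      (-1 : ℍ) ^ #(K ∩ H) * ((JK I K)⁻¹ * f (conjQ H (ptOf α β I))) := by
  suffices h : ∑ H : Finset (Fin n),
      (-1 : ℍ) ^ #(K ∩ H) * ((JK I K)⁻¹ * f (conjQ H (ptOf α β I))) = 2 ^ n * F K (zOf α β) by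
    rw [h, inv_mul_cancel_left₀ (pow_ne_zero n two_ne_zero)]
  calc ∑ H : Finset (Fin n), (-1 : ℍ) ^ #(K ∩ H) * ((JK I K)⁻¹ * f (conjQ H (ptOf α β I)))
      = ∑ L, (∑ H : Finset (Fin n), (-1 : ℍ) ^ #(K ∩ H) * (-1) ^ #(L ∩ H)) *
          ((JK I K)⁻¹ * (JK I L * F L (zOf α β))) := by
        simp only [hind.apply_conjQ_ptOf hI hz, mul_sum, sum_mul]
        rw [sum_comm]
        refine sum_congr rfl fun L _ => sum_congr rfl fun H _ => ?_
        rw [← mul_assoc (JK I K)⁻¹, ← ((Commute.neg_one_left _).pow_left _).eq]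
        simp only [mul_assoc]
    _ = 2 ^ n * ((JK I K)⁻¹ * (JK I K * F K (zOf α β))) := by
        simp only [sum_neg_one_pow_card_inter_mul, Fintype.card_fin, ite_mul, zero_mul,
          sum_ite_eq, mem_univ, if_true]
    _ = 2 ^ n * F K (zOf α β) := by rw [inv_mul_cancel_left₀ (JK_ne_zero hI K)]

theorem apply_ptOf_eq_sum (hind : Induces D F f) (hI : ∀ h, I h ∈ Sph) (hz : zOf α β ∈ D)
    {J : Fin n → ℍ} (hJ : ∀ h, J h ∈ Sph) :
    f (ptOf α β J) = ((2 : ℍ) ^ n)⁻¹ * ∑ K : Finset (Fin n), ∑ H : Finset (Fin n),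
      (-1 : ℍ) ^ #(K ∩ H) * (JK J K * ((JK I K)⁻¹ * f (conjQ H (ptOf α β I)))) := by
  rw [hind α β J hJ hz, mul_sum]
  refine sum_congr rfl fun K _ => ?_
  rw [hind.stem_eq_sum hI hz K, ← mul_assoc,
    (((Commute.ofNat_right _ 2).pow_right n).inv_right₀).eq, mul_assoc, mul_sum]
  congr 1
  refine sum_congr rfl fun H _ => ?_
  rw [← mul_assoc, ((Commute.neg_one_right _).pow_right _).eq, mul_assoc]

theorem stem_unique {G : Finset (Fin n) → (Fin n → ℂ) → ℍ} (hF : Induces D F f)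
    (hG : Induces D G f) (K : Finset (Fin n)) {z : Fin n → ℂ} (hz : z ∈ D) : F K z = G K z := by
  obtain ⟨J, hJ⟩ := Sph_nonempty
  have hz' : zOf (fun h => (z h).re) (fun h => (z h).im) ∈ D := by rwa [zOf_re_im]
  rw [← zOf_re_im z, hF.stem_eq_sum (I := fun _ => J) (fun _ => hJ) hz',
    hG.stem_eq_sum (fun _ => hJ) hz']

end Induces

theorem stmt1_general (n : ℕ) (D : Set (Fin n → ℂ))
    (f : (Fin n → ℍ) → ℍ) (hf : IsSlice D f)
    (α β : Fin n → ℝ) (I : Fin n → ℍ) (hI : ∀ h, I h ∈ Sph)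
    (hz : zOf α β ∈ D) :
    (∀ J : Fin n → ℍ, (∀ h, J h ∈ Sph) →
      f (ptOf α β J) =
        ((2 : ℍ) ^ n)⁻¹ * ∑ K : Finset (Fin n), ∑ H : Finset (Fin n),
          (-1 : ℍ) ^ ((K ∩ H).card) *
            (JK J K * ((JK I K)⁻¹ * f (conjQ H (ptOf α β I))))) ∧
    (∀ F, IsStem D F → Induces D F f → ∀ K : Finset (Fin n),
      F K (zOf α β) =
        ((2 : ℍ) ^ n)⁻¹ * ∑ H : Finset (Fin n),
          (-1 : ℍ) ^ ((K ∩ H).card) * ((JK I K)⁻¹ * f (conjQ H (ptOf α β I)))) ∧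
    (∀ F G, IsStem D F → Induces D F f → IsStem D G → Induces D G f →
      ∀ K : Finset (Fin n), ∀ z ∈ D, F K z = G K z) := by
  obtain ⟨F₀, -, hF₀⟩ := hf
  exact ⟨fun J hJ => hF₀.apply_ptOf_eq_sum hI hz hJ,
    fun F _ hF K => hF.stem_eq_sum hI hz K,
    fun F G _ hF _ hG K _ hz' => hF.stem_unique hG K hz'⟩

/-- **Representation formula.** -/
theorem stmt1 (n : ℕ) (hn : 0 < n) (D : Set (Fin n → ℂ)) (hne : D.Nonempty)
    (hinv : ConjInv D) (f : (Fin n → ℍ) → ℍ) (hf : IsSlice D f)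
    (α β : Fin n → ℝ) (I : Fin n → ℍ) (hI : ∀ h, I h ∈ Sph)
    (hz : zOf α β ∈ D) :
    (∀ J : Fin n → ℍ, (∀ h, J h ∈ Sph) →
      f (ptOf α β J) =
        ((2 : ℍ) ^ n)⁻¹ * ∑ K : Finset (Fin n), ∑ H : Finset (Fin n),
          (-1 : ℍ) ^ ((K ∩ H).card) *
            (JK J K * ((JK I K)⁻¹ * f (conjQ H (ptOf α β I))))) ∧
    (∀ F, IsStem D F → Induces D F f → ∀ K : Finset (Fin n),
      F K (zOf α β) =
        ((2 : ℍ) ^ n)⁻¹ * ∑ H : Finset (Fin n),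
          (-1 : ℍ) ^ ((K ∩ H).card) * ((JK I K)⁻¹ * f (conjQ H (ptOf α β I)))) ∧
    (∀ F G, IsStem D F → Induces D F f → IsStem D G → Induces D G f →
      ∀ K : Finset (Fin n), ∀ z ∈ D, F K z = G K z) :=
  stmt1_general n D f hf α β I hI hz

end
end

section
/- For every n ≥ 2, the function f : ℍⁿ → ℍ defined by f(x₁,…,xₙ) := x₂x₁ (the quaternionic product of the second coordinate by the first, in this order) is not a slice function on ℍⁿ = Ω_{ℂⁿ}. -/
noncomputable section

variable {n : ℕ}

/-!
At a point whose imaginary parts vanish outside the first two coordinates, every stem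
component `F_K` with `K ⊄ {1, 2}` vanishes, being odd under conjugation of a real coordinate.
So a slice function takes there the bi-affine form `d + A a + B b + A B c` in the imaginary units
`A = J₁`, `B = J₂`. For `x₂ x₁ = B A`, changing the signs of `A` and `B` gives `B A = A B c` for
all units; `A = B` forces `c = 1`, and two non-commuting units give a contradiction.
-/

theorem neg_mem_Sph {A : ℍ} (hA : A ∈ Sph) : -A ∈ Sph := by
  rw [Sph, Set.mem_ofPred_eq, neg_sq]
  exact hA

theorem exists_mem_Sph_mul_ne_mul : ∃ A ∈ Sph, ∃ B ∈ Sph, B * A ≠ A * B := by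
  have hi : (⟨0, 1, 0, 0⟩ : ℍ) ^ 2 = -1 := by ext <;> simp [sq]
  have hj : (⟨0, 0, 1, 0⟩ : ℍ) ^ 2 = -1 := by ext <;> simp [sq]
  have hji : (⟨0, 0, 1, 0⟩ : ℍ) * ⟨0, 1, 0, 0⟩ ≠ ⟨0, 1, 0, 0⟩ * ⟨0, 0, 1, 0⟩ := by
    intro h
    have hk := congrArg QuaternionAlgebra.imK h
    norm_num at hk
  exact ⟨_, hi, _, hj, hji⟩

section Biaffine

variable {d a b c : ℍ}

/-- The mixed second difference in the signs of `A` and `B` kills every term but `A * B * c`. -/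
theorem mul_swap_eq_of_biaffine
    (h : ∀ A ∈ Sph, ∀ B ∈ Sph, B * A = d + A * a + B * b + A * B * c)
    {A B : ℍ} (hA : A ∈ Sph) (hB : B ∈ Sph) : B * A = A * B * c := by
  have hfour : (4 : ℕ) • (B * A) = (4 : ℕ) • (A * B * c) :=
    calc (4 : ℕ) • (B * A) = B * A - (-B) * A - B * (-A) + (-B) * (-A) := by noncomm_ring
      _ = (d + A * a + B * b + A * B * c) - (d + A * a + -B * b + A * -B * c)
          - (d + -A * a + B * b + -A * B * c) + (d + -A * a + -B * b + -A * -B * c) := by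
        rw [h A hA B hB, h A hA (-B) (neg_mem_Sph hB), h (-A) (neg_mem_Sph hA) B hB,
          h (-A) (neg_mem_Sph hA) (-B) (neg_mem_Sph hB)]
      _ = (4 : ℕ) • (A * B * c) := by noncomm_ring
  rw [← Nat.cast_smul_eq_nsmul ℝ, ← Nat.cast_smul_eq_nsmul ℝ] at hfour
  exact smul_right_injective ℍ (by norm_num) hfour

theorem not_biaffine_mul_swap :
    ¬ ∀ A ∈ Sph, ∀ B ∈ Sph, B * A = d + A * a + B * b + A * B * c := by
  intro h
  obtain ⟨A, hA, B, hB, hne⟩ := exists_mem_Sph_mul_ne_mul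
  have hc : c = 1 := by
    have hAA := mul_swap_eq_of_biaffine h hA hA
    rw [← sq, hA, neg_one_mul] at hAA
    exact (neg_inj.mp hAA).symm
  exact hne (by simpa [hc] using mul_swap_eq_of_biaffine h hA hB)

end Biaffine

section Slice

variable {n : ℕ}

theorem JK_empty (J : Fin n → ℍ) : JK J ∅ = 1 := by
  simp [JK]

theorem JK_singleton (J : Fin n → ℍ) (a : Fin n) : JK J {a} = J a := by
  simp [JK]

theorem JK_pair (J : Fin n → ℍ) {a b : Fin n} (hab : a < b) : JK J {a, b} = J a * J b := by
  rw [JK, Finset.sort_insert _ (by simpa using hab.le) (by simpa using hab.ne)]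
  simp

theorem conjCoord_zOf_of_eq_zero {α β : Fin n → ℝ} {h : Fin n} (hβ : β h = 0) :
    conjCoord h (zOf α β) = zOf α β := by
  funext m
  rcases eq_or_ne m h with rfl | hm
  · simp [conjCoord, zOf, hβ]
  · simp [conjCoord, Function.update_of_ne hm]

theorem IsStem.eq_zero_of_conjCoord_eq {D : Set (Fin n → ℂ)}
    {F : Finset (Fin n) → (Fin n → ℂ) → ℍ} (hF : IsStem D F) {K : Finset (Fin n)}
    {h : Fin n} {z : Fin n → ℂ} (hz : z ∈ D) (hK : h ∈ K) (hfix : conjCoord h z = z) :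
    F K z = 0 := by
  have hneg := hF K h z hz
  rw [hfix, if_pos hK, neg_one_mul] at hneg
  have htwo : (2 : ℝ) • F K z = 0 := by
    rw [two_smul]
    nth_rewrite 1 [hneg]
    exact neg_add_cancel _
  simpa using htwo

theorem Induces.eq_of_imaginary_support_pair {D : Set (Fin n → ℂ)}
    {F : Finset (Fin n) → (Fin n → ℂ) → ℍ} {f : (Fin n → ℍ) → ℍ}
    (hF : IsStem D F) (hf : Induces D F f) {a b : Fin n} (hab : a < b)
    {α β : Fin n → ℝ} (hβ : ∀ h, h ≠ a → h ≠ b → β h = 0)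
    {J : Fin n → ℍ} (hJ : ∀ h, J h ∈ Sph) (hz : zOf α β ∈ D) :
    f (ptOf α β J) = F ∅ (zOf α β) + J a * F {a} (zOf α β) + J b * F {b} (zOf α β)
      + J a * J b * F {a, b} (zOf α β) := by
  -- `F K` is odd in every coordinate of `K`, and `zOf α β` is real outside `{a, b}`.
  have hvanish : ∀ K ∉ ({a, b} : Finset (Fin n)).powerset, JK J K * F K (zOf α β) = 0 := by
    intro K hK
    obtain ⟨h, hhK, hh⟩ := Finset.not_subset.mp (Finset.mem_powerset.not.mp hK)
    simp only [Finset.mem_insert, Finset.mem_singleton, not_or] at hh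
    rw [hF.eq_zero_of_conjCoord_eq hz hhK (conjCoord_zOf_of_eq_zero (hβ h hh.1 hh.2)),
      mul_zero]
  have hsingleton : ({b} : Finset (Fin n)).powerset = {∅, {b}} := by
    ext
    simp [Finset.subset_singleton_iff]
  rw [hf α β J hJ hz, ← Finset.sum_subset (Finset.subset_univ _) (fun K _ hK => hvanish K hK),
    Finset.sum_powerset_insert (by simpa using hab.ne), hsingleton,
    Finset.sum_pair (Finset.singleton_ne_empty b).symm,
    Finset.sum_pair (Finset.singleton_ne_empty b).symm]
  simp only [insert_empty_eq, JK_empty, JK_singleton, JK_pair J hab, one_mul]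
  abel

end Slice

/-- For `n ≥ 2`, the pointwise product `x₂ x₁` is not a slice
function on `ℍⁿ = Ω_{ℂⁿ}`. -/
theorem stmt5 (n : ℕ) (hn : 2 ≤ n) :
    ¬ IsSlice (Set.univ : Set (Fin n → ℂ))
      (fun x : Fin n → ℍ => x ⟨1, by omega⟩ * x ⟨0, by omega⟩) := by
  rintro ⟨F, hF, hf⟩
  set i₀ : Fin n := ⟨0, by omega⟩
  set i₁ : Fin n := ⟨1, by omega⟩
  have h01 : i₀ < i₁ := Fin.mk_lt_mk.mpr zero_lt_one
  let β : Fin n → ℝ := fun h => if h = i₀ ∨ h = i₁ then 1 else 0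
  have hβ : ∀ h, h ≠ i₀ → h ≠ i₁ → β h = 0 := fun h h0 h1 => by simp [β, h0, h1]
  let z := zOf 0 β
  refine not_biaffine_mul_swap (d := F ∅ z) (a := F {i₀} z) (b := F {i₁} z)
    (c := F {i₀, i₁} z) fun A hA B hB => ?_
  let J : Fin n → ℍ := fun h => if h = i₁ then B else A
  have hJ : ∀ h, J h ∈ Sph := fun h => by dsimp only [J]; split <;> assumption
  have hpt : ∀ h, (h = i₀ ∨ h = i₁) → ptOf 0 β J h = J h := fun h hh => by
    simp [ptOf, β, hh]
  have key := hf.eq_of_imaginary_support_pair hF h01 (α := 0) hβ hJ (Set.mem_univ _)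
  rw [hpt i₀ (Or.inl rfl), hpt i₁ (Or.inr rfl)] at key
  simpa [J, h01.ne] using key
end
end

section
/- For each k ∈ ℕ let p_k, q_k : ℝ² → ℝ be defined by (α+iβ)^k = p_k(α,β) + i q_k(α,β). Let ℓ = (ℓ₁,…,ℓₙ) ∈ ℕⁿ and a ∈ ℍ, and define F^{(ℓ)} = (F^{(ℓ)}_K)_{K∈𝒫(n)} by F^{(ℓ)}_K(z) := (∏_{h∈{1,…,n}∖K} p_{ℓ_h}(α_h,β_h)) (∏_{h∈K} q_{ℓ_h}(α_h,β_h)) a for z = (α₁+iβ₁,…,αₙ+iβₙ) ∈ D. Then F^{(ℓ)} is a stem function on D and the slice function it induces is the monomial function x ↦ x^ℓ a on Ω_D. Consequently every polynomial function on Ω_D is a slice function. -/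
noncomputable section

variable {n : ℕ}

/-!
Since `J ^ 2 = -1`, the map `a + b i ↦ a + b J` is an `ℝ`-algebra homomorphism `ℂ → ℍ`,
so `(α + β J) ^ k = p_k(α, β) + q_k(α, β) J`. Because real scalars are central, expanding
the ordered product `x^ℓ = ∏ₕ (pₕ + qₕ Jₕ)` gives `∑_K J_K (∏_{h ∉ K} pₕ) (∏_{h ∈ K} qₕ)`.
Conjugating `z_h` fixes `Re z_h^{ℓ_h}` and negates `Im z_h^{ℓ_h}`, which is the stem
condition. Stem functions, and the slice functions they induce, add termwise, so polynomials
are slice functions.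
-/

open Finset Function ComplexConjugate

theorem list_prod_sort_map_algebraMap_add_smul {ι R A : Type*} [LinearOrder ι]
    [CommSemiring R] [Semiring A] [Algebra R A] (r c : ι → R) (J : ι → A) (s : Finset ι) :
    ((s.sort (· ≤ ·)).map fun h => algebraMap R A (r h) + c h • J h).prod =
      ∑ t ∈ s.powerset,
        ((∏ h ∈ s \ t, r h) * ∏ h ∈ t, c h) • ((t.sort (· ≤ ·)).map J).prod := by
  classical
  induction s using Finset.induction_on_min with
  | empty => simp
  | insert a s ha ih =>
    have has : a ∉ s := fun h => lt_irrefl a (ha a h)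
    rw [sort_insert _ (fun b hb => (ha b hb).le) has, List.map_cons, List.prod_cons, ih,
      sum_powerset_insert has, add_mul, mul_sum, mul_sum]
    congr 1 <;> refine sum_congr rfl fun t ht => ?_
    · have hat : a ∉ t := fun h => has (mem_powerset.mp ht h)
      rw [insert_sdiff_of_notMem _ hat, prod_insert (by simp [has]), ← smul_eq_mul,
        algebraMap_smul, smul_smul, mul_assoc]
    · have hat : a ∉ t := fun h => has (mem_powerset.mp ht h)
      rw [insert_sdiff_insert, sdiff_insert_of_notMem has, prod_insert hat,
        sort_insert _ (fun b hb => (ha b (mem_powerset.mp ht hb)).le) hat, List.map_cons,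
        List.prod_cons, smul_mul_assoc, mul_smul_comm, smul_smul, mul_left_comm]

theorem Complex.algebraMap_re_add_im_smul_pow {A : Type*} [Ring A] [Algebra ℝ A] {J : A}
    (hJ : J * J = -1) (w : ℂ) (k : ℕ) :
    (algebraMap ℝ A w.re + w.im • J) ^ k = algebraMap ℝ A (w ^ k).re + (w ^ k).im • J := by
  simpa using (map_pow (Complex.liftAux J hJ) w k).symm

theorem apply_re_im_eq_re_im_pow {p q : ℕ → ℝ → ℝ → ℝ}
    (hpq : ∀ (k : ℕ) (a b : ℝ),
      ((a : ℂ) + (b : ℂ) * Complex.I) ^ k = (p k a b : ℂ) + (q k a b : ℂ) * Complex.I)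
    (k : ℕ) (w : ℂ) : p k w.re w.im = (w ^ k).re ∧ q k w.re w.im = (w ^ k).im := by
  have h := hpq k w.re w.im
  rw [Complex.re_add_im] at h
  simp [h]

def sliceCoeff {ι : Type*} [Fintype ι] [DecidableEq ι] (w : ι → ℂ) (K : Finset ι) : ℝ :=
  (∏ h ∈ Kᶜ, (w h).re) * ∏ h ∈ K, (w h).im

theorem sliceCoeff_update_conj {ι : Type*} [Fintype ι] [DecidableEq ι] (w : ι → ℂ) (h : ι)
    (K : Finset ι) :
    sliceCoeff (update w h (conj (w h))) K = (if h ∈ K then -1 else 1) * sliceCoeff w K := by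
  have hre : (fun i => (update w h (conj (w h)) i).re) = fun i => (w i).re := by
    funext i; by_cases hi : i = h <;> simp [hi]
  have him : (fun i => (update w h (conj (w h)) i).im) =
      update (fun i => (w i).im) h (-(w h).im) := by
    funext i; by_cases hi : i = h <;> simp [hi]
  unfold sliceCoeff
  rw [hre, him]
  split_ifs with hK
  · rw [prod_update_of_mem hK, sdiff_singleton_eq_erase, ← mul_prod_erase K _ hK]; ring
  · rw [prod_update_of_notMem hK]; ring

def monomialStem (ℓ : Fin n → ℕ) (a : ℍ) : Finset (Fin n) → (Fin n → ℂ) → ℍ :=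
  fun K z => (sliceCoeff (fun h => z h ^ ℓ h) K : ℍ) * a

theorem isStem_monomialStem (D : Set (Fin n → ℂ)) (ℓ : Fin n → ℕ) (a : ℍ) :
    IsStem D (monomialStem ℓ a) := by
  intro K h z _
  have hconj : (fun i => conjCoord h z i ^ ℓ i) =
      update (fun i => z i ^ ℓ i) h (conj (z h ^ ℓ h)) := by
    funext i; by_cases hi : i = h
    · subst hi; simp [conjCoord]
    · simp [conjCoord, hi]
  simp only [monomialStem, hconj, sliceCoeff_update_conj]
  split_ifs <;> simp

theorem induces_monomialStem (D : Set (Fin n → ℂ)) (ℓ : Fin n → ℕ) (a : ℍ) :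
    Induces D (monomialStem ℓ a) (mono ℓ a) := by
  intro α β J hJ _
  have hfactor : ∀ h, ptOf α β J h ^ ℓ h =
      algebraMap ℝ ℍ (zOf α β h ^ ℓ h).re + (zOf α β h ^ ℓ h).im • J h := by
    intro h
    rw [← Complex.algebraMap_re_add_im_smul_pow ((sq (J h)).symm.trans (hJ h))]
    simp [ptOf, zOf, Quaternion.coe_mul_eq_smul]
  simp only [mono, hfactor]
  rw [List.ofFn_eq_map, ← Fin.sort_univ, list_prod_sort_map_algebraMap_add_smul, powerset_univ,
    sum_mul]
  refine sum_congr rfl fun K _ => ?_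
  rw [← compl_eq_univ_sdiff, smul_mul_assoc, monomialStem, Quaternion.coe_mul_eq_smul,
    mul_smul_comm]
  rfl

theorem IsSlice.finset_sum {D : Set (Fin n → ℂ)} {ι : Type*} {f : ι → (Fin n → ℍ) → ℍ}
    (L : Finset ι) (hf : ∀ m ∈ L, IsSlice D (f m)) : IsSlice D (fun x => ∑ m ∈ L, f m x) := by
  choose! F hstem hind using hf
  refine ⟨fun K z => ∑ m ∈ L, F m K z, fun K h z hz => ?_, fun α β J hJ hz => ?_⟩
  · simp only [mul_sum]
    exact sum_congr rfl fun m hm => hstem m hm K h z hz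
  · simp only [mul_sum]
    rw [sum_comm]
    exact sum_congr rfl fun m hm => hind m hm α β J hJ hz

theorem monomialStem_eq {p q : ℕ → ℝ → ℝ → ℝ}
    (hpq : ∀ (k : ℕ) (a b : ℝ),
      ((a : ℂ) + (b : ℂ) * Complex.I) ^ k = (p k a b : ℂ) + (q k a b : ℂ) * Complex.I)
    (ℓ : Fin n → ℕ) (a : ℍ) :
    (fun K z =>
        ((((∏ h ∈ Kᶜ, p (ℓ h) (z h).re (z h).im) *
            ∏ h ∈ K, q (ℓ h) (z h).re (z h).im : ℝ)) : ℍ) * a) = monomialStem ℓ a := by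
  funext K z
  simp only [monomialStem, sliceCoeff, (apply_re_im_eq_re_im_pow hpq _ _).1,
    (apply_re_im_eq_re_im_pow hpq _ _).2]

theorem stmt6_general (n : ℕ) (D : Set (Fin n → ℂ))
    (p q : ℕ → ℝ → ℝ → ℝ)
    (hpq : ∀ (k : ℕ) (a b : ℝ),
      ((a : ℂ) + (b : ℂ) * Complex.I) ^ k = (p k a b : ℂ) + (q k a b : ℂ) * Complex.I)
    (ℓ : Fin n → ℕ) (a : ℍ) :
    (IsStem D (fun K z =>
        ((((∏ h ∈ Kᶜ, p (ℓ h) (z h).re (z h).im) *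
            ∏ h ∈ K, q (ℓ h) (z h).re (z h).im : ℝ)) : ℍ) * a) ∧
      Induces D (fun K z =>
        ((((∏ h ∈ Kᶜ, p (ℓ h) (z h).re (z h).im) *
            ∏ h ∈ K, q (ℓ h) (z h).re (z h).im : ℝ)) : ℍ) * a)
        (mono ℓ a)) ∧
    ∀ (L : Finset (Fin n → ℕ)) (c : (Fin n → ℕ) → ℍ),
      IsSlice D (fun x => ∑ m ∈ L, mono m (c m) x) := by
  rw [monomialStem_eq hpq]
  refine ⟨⟨isStem_monomialStem D ℓ a, induces_monomialStem D ℓ a⟩, fun L c => ?_⟩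
  exact IsSlice.finset_sum L fun m _ =>
    ⟨_, isStem_monomialStem D m (c m), induces_monomialStem D m (c m)⟩

/-- The canonical stem function of a monomial, and sliceness of
polynomial functions. -/
theorem stmt6 (n : ℕ) (hn : 0 < n) (D : Set (Fin n → ℂ)) (hne : D.Nonempty)
    (hinv : ConjInv D)
    (p q : ℕ → ℝ → ℝ → ℝ)
    (hpq : ∀ (k : ℕ) (a b : ℝ),
      ((a : ℂ) + (b : ℂ) * Complex.I) ^ k = (p k a b : ℂ) + (q k a b : ℂ) * Complex.I)
    (ℓ : Fin n → ℕ) (a : ℍ) :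
    (IsStem D (fun K z =>
        ((((∏ h ∈ Kᶜ, p (ℓ h) (z h).re (z h).im) *
            ∏ h ∈ K, q (ℓ h) (z h).re (z h).im : ℝ)) : ℍ) * a) ∧
      Induces D (fun K z =>
        ((((∏ h ∈ Kᶜ, p (ℓ h) (z h).re (z h).im) *
            ∏ h ∈ K, q (ℓ h) (z h).re (z h).im : ℝ)) : ℍ) * a)
        (mono ℓ a)) ∧
    ∀ (L : Finset (Fin n → ℕ)) (c : (Fin n → ℕ) → ℍ),
      IsSlice D (fun x => ∑ m ∈ L, mono m (c m) x) :=
  stmt6_general n D p q hpq ℓ a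

end
end

section
/- Leibniz's rule: let D be open and let f, g : Ω_D → ℍ be slice functions induced by C¹ stem functions. Then for every h ∈ {1,…,n}: ∂(f⊙g)/∂x_h = (∂f/∂x_h)⊙g + f⊙(∂g/∂x_h) and ∂(f⊙g)/∂x_h^c = (∂f/∂x_h^c)⊙g + f⊙(∂g/∂x_h^c) on Ω_D. -/
noncomputable section

variable {n : ℕ}

/-!
The operators `∂_h`, `∂̄_h` act on a stem function as `½ (∂/∂α_h ± τ_h ∂/∂β_h)`, where the twist
`(τ_h F)_K = (-1)^{|K ∩ {h}|} F_{K △ {h}}` (here `stemTwist`). Since `⊙` is bilinear with constant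
coefficients, each real partial derivative obeys the ordinary Leibniz rule componentwise. The twist
passes through `⊙` into either factor because `σ(A, B) = (-1)^{|A ∩ B|}` is a symmetric bicharacter
for `△`; writing `(F ⊙ G)_K` as a single sum over the left (resp. right) index makes this a
pointwise sign identity with no reindexing. Combining the two gives the rule for any real
combination `a ∂/∂α_h + b τ_h ∂/∂β_h`, in particular for `∂_h` and `∂̄_h`.
-/

open Finset
open scoped symmDiff

section SliceLeibniz

lemma neg_one_pow_card_symmDiff {α : Type*} [DecidableEq α] (s t : Finset α) :
    (-1 : ℝ) ^ #(s ∆ t) = (-1) ^ #s * (-1) ^ #t := by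
  have hsup : #(s ∆ t) + #(s ∩ t) = #(s ∪ t) :=
    (card_union_of_disjoint (disjoint_symmDiff_inf s t)).symm.trans
      (congrArg card (symmDiff_sup_inf s t))
  have hcard : #(s ∆ t) + 2 * #(s ∩ t) = #s + #t := by
    have := card_union_add_card_inter s t
    omega
  rw [← pow_add, ← hcard, pow_add, pow_mul]
  simp

lemma sigmaT_comm (A B : Finset (Fin n)) : sigmaT A B = sigmaT B A := by
  rw [sigmaT, sigmaT, inter_comm]

lemma sigmaT_symmDiff_left (A B C : Finset (Fin n)) :
    sigmaT (A ∆ B) C = sigmaT A C * sigmaT B C := by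
  rw [sigmaT, ← inf_eq_inter, inf_symmDiff_distrib_right]
  exact neg_one_pow_card_symmDiff _ _

lemma sigmaT_symmDiff_right (A B C : Finset (Fin n)) :
    sigmaT A (B ∆ C) = sigmaT A B * sigmaT A C := by
  rw [sigmaT_comm, sigmaT_symmDiff_left, sigmaT_comm B, sigmaT_comm C]

lemma symmDiff_eq_iff_eq_symmDiff {α : Type*} [GeneralizedBooleanAlgebra α] {a b c : α} :
    a ∆ b = c ↔ b = a ∆ c := by
  constructor <;> rintro rfl <;> simp [symmDiff_symmDiff_cancel_left]

def stemTwist (h : Fin n) (F : Finset (Fin n) → (Fin n → ℂ) → ℍ) :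
    Finset (Fin n) → (Fin n → ℂ) → ℍ :=
  fun K z => sigmaT K {h} • F (K ∆ {h}) z

def stemDeriv (F : Finset (Fin n) → (Fin n → ℂ) → ℍ) (v : Fin n → ℂ) :
    Finset (Fin n) → (Fin n → ℂ) → ℍ :=
  fun K z => fderiv ℝ (F K) z v

variable (σ : Finset (Fin n) → Finset (Fin n) → ℝ) (F F' G G' : Finset (Fin n) → (Fin n → ℂ) → ℍ)

lemma SP_apply_eq_sum_left (K : Finset (Fin n)) (z : Fin n → ℂ) :
    SP σ F G K z = ∑ H, σ H (H ∆ K) • (F H z * G (H ∆ K) z) := by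
  refine sum_congr rfl fun H _ => ?_
  simp_rw [symmDiff_eq_iff_eq_symmDiff, sum_ite_eq', mem_univ, if_true]

lemma SP_apply_eq_sum_right (K : Finset (Fin n)) (z : Fin n → ℂ) :
    SP σ F G K z = ∑ L, σ (L ∆ K) L • (F (L ∆ K) z * G L z) := by
  rw [SP, sum_comm]
  refine sum_congr rfl fun L _ => ?_
  simp_rw [symmDiff_comm _ L, symmDiff_eq_iff_eq_symmDiff, sum_ite_eq', mem_univ, if_true]

lemma SP_add_left : SP σ (F + F') G = SP σ F G + SP σ F' G := by
  funext K z
  simp only [SP_apply_eq_sum_left, Pi.add_apply, add_mul, smul_add, sum_add_distrib]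

lemma SP_add_right : SP σ F (G + G') = SP σ F G + SP σ F G' := by
  funext K z
  simp only [SP_apply_eq_sum_left, Pi.add_apply, mul_add, smul_add, sum_add_distrib]

lemma SP_smul_left (c : ℝ) : SP σ (c • F) G = c • SP σ F G := by
  funext K z
  simp only [SP_apply_eq_sum_left, Pi.smul_apply, smul_mul_assoc, smul_sum, smul_comm c]

lemma SP_smul_right (c : ℝ) : SP σ F (c • G) = c • SP σ F G := by
  funext K z
  simp only [SP_apply_eq_sum_left, Pi.smul_apply, mul_smul_comm, smul_sum, smul_comm c]

lemma SP_sigmaT_stemTwist_left (h : Fin n) :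
    SP sigmaT (stemTwist h F) G = stemTwist h (SP sigmaT F G) := by
  funext K z
  simp only [stemTwist, SP_apply_eq_sum_right, smul_sum, smul_mul_assoc, smul_smul,
    symmDiff_assoc]
  refine sum_congr rfl fun L _ => ?_
  congr 1
  simp only [sigmaT_symmDiff_left, sigmaT_comm {h} L]
  ring

lemma SP_sigmaT_stemTwist_right (h : Fin n) :
    SP sigmaT F (stemTwist h G) = stemTwist h (SP sigmaT F G) := by
  funext K z
  simp only [stemTwist, SP_apply_eq_sum_left, smul_sum, mul_smul_comm, smul_smul,
    symmDiff_assoc]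
  refine sum_congr rfl fun H _ => ?_
  congr 1
  simp only [sigmaT_symmDiff_left, sigmaT_symmDiff_right]
  ring

lemma stemDeriv_SP_apply {z : Fin n → ℂ} (hF : ∀ H, DifferentiableAt ℝ (F H) z)
    (hG : ∀ L, DifferentiableAt ℝ (G L) z) (v : Fin n → ℂ) (K : Finset (Fin n)) :
    stemDeriv (SP σ F G) v K z = SP σ (stemDeriv F v) G K z + SP σ F (stemDeriv G v) K z := by
  have hSP : SP σ F G K = fun w => ∑ H, σ H (H ∆ K) • (F H w * G (H ∆ K) w) :=
    funext (SP_apply_eq_sum_left σ F G K)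
  rw [stemDeriv, hSP, fderiv_fun_sum (A := fun H w => σ H (H ∆ K) • (F H w * G (H ∆ K) w))
    fun H _ => ((hF H).mul (hG (H ∆ K))).const_smul (σ H (H ∆ K))]
  simp only [SP_apply_eq_sum_left, _root_.sum_apply, ← sum_add_distrib, ← smul_add]
  refine sum_congr rfl fun H _ => ?_
  rw [fderiv_fun_const_smul (f := fun w => F H w * G (H ∆ K) w) ((hF H).mul (hG (H ∆ K))),
    fderiv_fun_mul' (hF H) (hG _)]
  simp [stemDeriv, add_comm]

lemma SPT_leibniz_apply {z : Fin n → ℂ} (hF : ∀ H, DifferentiableAt ℝ (F H) z)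
    (hG : ∀ L, DifferentiableAt ℝ (G L) z) (h : Fin n) (a b : ℝ) (v w : Fin n → ℂ)
    (K : Finset (Fin n)) :
    (a • stemDeriv (SPT F G) v + b • stemTwist h (stemDeriv (SPT F G) w)) K z =
      SPT (a • stemDeriv F v + b • stemTwist h (stemDeriv F w)) G K z +
        SPT F (a • stemDeriv G v + b • stemTwist h (stemDeriv G w)) K z := by
  have hprod := stemDeriv_SP_apply sigmaT F G hF hG
  simp only [SPT, SP_add_left, SP_add_right, SP_smul_left, SP_smul_right,
    SP_sigmaT_stemTwist_left, SP_sigmaT_stemTwist_right, Pi.add_apply, Pi.smul_apply, stemTwist,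
    hprod]
  module

lemma Dplus_eq (h : Fin n) :
    Dplus F h = (2⁻¹ : ℝ) • stemDeriv F (Pi.single h 1) +
      (2⁻¹ : ℝ) • stemTwist h (stemDeriv F (Pi.single h Complex.I)) := by
  funext K z
  simp only [Dplus, stemDeriv, stemTwist, sigmaT, Pi.add_apply, Pi.smul_apply, smul_add]

lemma Dminus_eq (h : Fin n) :
    Dminus F h = (2⁻¹ : ℝ) • stemDeriv F (Pi.single h 1) +
      (-2⁻¹ : ℝ) • stemTwist h (stemDeriv F (Pi.single h Complex.I)) := by
  funext K z
  simp only [Dminus, stemDeriv, stemTwist, sigmaT, Pi.add_apply, Pi.smul_apply]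
  module

end SliceLeibniz

theorem stmt13_general (n : ℕ) (D : Set (Fin n → ℂ)) (hD : IsOpen D)
    (F G : Finset (Fin n) → (Fin n → ℂ) → ℍ)
    (hF1 : StemC1 D F) (hG1 : StemC1 D G) :
    ∀ h : Fin n, ∀ α β : Fin n → ℝ, ∀ J : Fin n → ℍ,
      (∀ k, J k ∈ Sph) → zOf α β ∈ D →
      (∑ K : Finset (Fin n), JK J K * Dplus (SPT F G) h K (zOf α β) =
        ∑ K : Finset (Fin n), JK J K * SPT (fun K' => Dplus F h K') G K (zOf α β) +
          ∑ K : Finset (Fin n), JK J K * SPT F (fun K' => Dplus G h K') K (zOf α β)) ∧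
      (∑ K : Finset (Fin n), JK J K * Dminus (SPT F G) h K (zOf α β) =
        ∑ K : Finset (Fin n), JK J K * SPT (fun K' => Dminus F h K') G K (zOf α β) +
          ∑ K : Finset (Fin n), JK J K * SPT F (fun K' => Dminus G h K') K (zOf α β)) := by
  intro h α β J _ hz
  have hdiff {Φ : Finset (Fin n) → (Fin n → ℂ) → ℍ} (hΦ : StemC1 D Φ) (K : Finset (Fin n)) :
      DifferentiableAt ℝ (Φ K) (zOf α β) :=
    ((hΦ K).differentiableOn one_ne_zero).differentiableAt (hD.mem_nhds hz)
  simp only [← sum_add_distrib, ← mul_add, Dplus_eq, Dminus_eq,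
    SPT_leibniz_apply F G (hdiff hF1) (hdiff hG1), and_self]

/-- **Leibniz's rule for the slice tensor product.** -/
theorem stmt13 (n : ℕ) (hn : 0 < n) (D : Set (Fin n → ℂ)) (hne : D.Nonempty)
    (hinv : ConjInv D) (hD : IsOpen D)
    (F G : Finset (Fin n) → (Fin n → ℂ) → ℍ)
    (hF : IsStem D F) (hG : IsStem D G) (hF1 : StemC1 D F) (hG1 : StemC1 D G)
    (f g : (Fin n → ℍ) → ℍ) (hf : Induces D F f) (hg : Induces D G g) :
    ∀ h : Fin n, ∀ α β : Fin n → ℝ, ∀ J : Fin n → ℍ,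
      (∀ k, J k ∈ Sph) → zOf α β ∈ D →
      (∑ K : Finset (Fin n), JK J K * Dplus (SPT F G) h K (zOf α β) =
        ∑ K : Finset (Fin n), JK J K * SPT (fun K' => Dplus F h K') G K (zOf α β) +
          ∑ K : Finset (Fin n), JK J K * SPT F (fun K' => Dplus G h K') K (zOf α β)) ∧
      (∑ K : Finset (Fin n), JK J K * Dminus (SPT F G) h K (zOf α β) =
        ∑ K : Finset (Fin n), JK J K * SPT (fun K' => Dminus F h K') G K (zOf α β) +
          ∑ K : Finset (Fin n), JK J K * SPT F (fun K' => Dminus G h K') K (zOf α β)) :=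
  stmt13_general n D hD F G hF1 hG1
end
end
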